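/- arXiv:2510.24132 — 2 statements merged into one kernel-verified Lean document; each statement's English description precedes it below -/
import Mathlib

section
/- Let R be a set of k-subsets of Z_n in which every t-subset of Z_n lies in at most one member of R, and let T_1, …, T_r be pairwise disjoint Steiner systems S(t−1, k−1, n) on Z_n such that every t-subset of Z_n not contained in a member of R is contained in (a block of) exactly one T_i. Then the code over Z_2^n × Z_{r+1} whose codewords are the indicator words of the blocks of R (with symbol 0 in the last coordinate) together with, for each block {x_1,…,x_{k−1}} of T_i, the word with ones at x_1,…,x_{k−1} and symbol i in the last coordinate, is a mixed Steiner system MS(t, k, Z_2^n × Z_{r+1}): every weight-t word is covered exactly once and the minimum Hamming distance is 2(k−t)+1. -/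
/-! For a weight-`k` codeword `c` and a weight-`t` word `x`, the distance `d(x, c)` is at least
`k - t`, with equality exactly when `c` covers `x`, i.e. `x` agrees with `c` wherever `x` is
nonzero: equality in the triangle inequality through `0`. For `x` with last symbol `0` the
covering property is the hypothesis on `R` and the `Tᵢ`; for `x` with last symbol `i + 1` it is
the Steiner property of `Tᵢ`. The distance bound follows from the covering property alone: two
codewords at distance at most `2(k - t)` share enough support (and, if needed, a common nonzero
symbol) to cover a common weight-`t` word. -/

open Finset

namespace MixedSteiner

section Words

variable {ι β α : Type*} [Fintype ι] [Zero β] [DecidableEq β] [Zero α]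

def wordSupport (u : ι → β) : Finset ι := {i | u i ≠ 0}

theorem hammingNorm_eq_card_wordSupport (u : ι → β) : hammingNorm u = #(wordSupport u) := rfl

def Covers (c x : (ι → β) × α) : Prop :=
  wordSupport x.1 ⊆ wordSupport c.1 ∧ (x.2 = 0 ∨ x.2 = c.2)

variable [DecidableEq ι]

def indicatorWord (b : Finset ι) : ι → ZMod 2 := fun p => if p ∈ b then 1 else 0

@[simp]
theorem wordSupport_indicatorWord (b : Finset ι) : wordSupport (indicatorWord b) = b := by
  ext p
  simp [wordSupport, indicatorWord]

@[simp]
theorem covers_indicatorWord_iff {b : Finset ι} {σ : α} {x : (ι → ZMod 2) × α} :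
    Covers (indicatorWord b, σ) x ↔ wordSupport x.1 ⊆ b ∧ (x.2 = 0 ∨ x.2 = σ) := by
  rw [Covers, wordSupport_indicatorWord]

theorem hammingNorm_indicatorWord (b : Finset ι) : hammingNorm (indicatorWord b) = #b := by
  rw [hammingNorm_eq_card_wordSupport, wordSupport_indicatorWord]

theorem hammingDist_eq_card_sdiff_add_card_sdiff (u v : ι → ZMod 2) :
    hammingDist u v = #(wordSupport u \ wordSupport v) + #(wordSupport v \ wordSupport u) := by
  rw [← card_union_of_disjoint disjoint_sdiff_sdiff, hammingDist]
  congr 1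
  ext p
  have key : ∀ a b : ZMod 2, a ≠ b ↔ (a ≠ 0 ∧ b = 0) ∨ (b ≠ 0 ∧ a = 0) := by decide
  simpa [wordSupport] using key (u p) (v p)

variable [DecidableEq α]

def mixedWeight (x : (ι → β) × α) : ℕ := hammingNorm x.1 + if x.2 = 0 then 0 else 1

def mixedDist (x y : (ι → β) × α) : ℕ := hammingDist x.1 y.1 + if x.2 = y.2 then 0 else 1

theorem covers_iff_mixedWeight_eq (c x : (ι → ZMod 2) × α) :
    Covers c x ↔ mixedWeight c = mixedWeight x + mixedDist x c := by
  have hx := card_sdiff_add_card_inter (wordSupport x.1) (wordSupport c.1)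
  have hc := card_sdiff_add_card_inter (wordSupport c.1) (wordSupport x.1)
  rw [inter_comm] at hc
  rw [Covers, ← sdiff_eq_empty_iff_subset, ← card_eq_zero, mixedWeight, mixedWeight, mixedDist,
    hammingDist_eq_card_sdiff_add_card_sdiff, hammingNorm_eq_card_wordSupport,
    hammingNorm_eq_card_wordSupport]
  by_cases hx0 : x.2 = 0 <;> by_cases hc0 : c.2 = 0 <;> by_cases hxc : x.2 = c.2 <;>
    simp only [hx0, hc0, hxc, if_true, if_false, true_or, or_true, or_false] <;> grind

theorem covers_iff_mixedDist_eq_sub {k t : ℕ} (htk : t ≤ k) {c x : (ι → ZMod 2) × α}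
    (hc : mixedWeight c = k) (hx : mixedWeight x = t) : Covers c x ↔ mixedDist x c = k - t := by
  rw [covers_iff_mixedWeight_eq, hc, hx]
  omega

theorem exists_covers_of_mixedDist_le {k t : ℕ} (htk : t ≤ k) {c₁ c₂ : (ι → ZMod 2) × α}
    (h₁ : mixedWeight c₁ = k) (h₂ : mixedWeight c₂ = k) (hd : mixedDist c₁ c₂ ≤ 2 * (k - t)) :
    ∃ x, mixedWeight x = t ∧ Covers c₁ x ∧ Covers c₂ x := by
  set A := wordSupport c₁.1 ∩ wordSupport c₂.1
  have hA₁ := card_sdiff_add_card_inter (wordSupport c₁.1) (wordSupport c₂.1)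
  have hA₂ := card_sdiff_add_card_inter (wordSupport c₂.1) (wordSupport c₁.1)
  rw [inter_comm] at hA₂
  rw [mixedWeight, hammingNorm_eq_card_wordSupport] at h₁ h₂
  rw [mixedDist, hammingDist_eq_card_sdiff_add_card_sdiff] at hd
  by_cases hA : t ≤ #A
  · obtain ⟨s, hsA, hs⟩ := exists_subset_card_eq hA
    refine ⟨(indicatorWord s, 0), ?_, ⟨?_, Or.inl rfl⟩, ⟨?_, Or.inl rfl⟩⟩
    · simp [mixedWeight, hammingNorm_indicatorWord, hs]
    · simpa using hsA.trans inter_subset_left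
    · simpa using hsA.trans inter_subset_right
  -- the distance bound leaves room only for a common nonzero symbol
  have hσ : c₁.2 = c₂.2 ∧ c₁.2 ≠ 0 := by
    by_cases h₁₂ : c₁.2 = c₂.2 <;> by_cases h0₁ : c₁.2 = 0 <;> by_cases h0₂ : c₂.2 = 0 <;>
      simp only [h₁₂, h0₁, h0₂, if_true, if_false] at h₁ h₂ hd <;> grind
  obtain ⟨s, hsA, hs⟩ := exists_subset_card_eq (show t - 1 ≤ #A by grind)
  refine ⟨(indicatorWord s, c₁.2), ?_, ⟨?_, Or.inr rfl⟩, ⟨?_, Or.inr hσ.1⟩⟩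
  · simp only [mixedWeight, hammingNorm_indicatorWord, hs, if_neg hσ.2]
    omega
  · simpa using hsA.trans inter_subset_left
  · simpa using hsA.trans inter_subset_right

theorem le_mixedDist_of_existsUnique_covers {k t : ℕ} (htk : t ≤ k)
    {C : Set ((ι → ZMod 2) × α)} (hC : ∀ c ∈ C, mixedWeight c = k)
    (hcov : ∀ x, mixedWeight x = t → ∃! c, c ∈ C ∧ Covers c x) :
    ∀ c₁ ∈ C, ∀ c₂ ∈ C, c₁ ≠ c₂ → 2 * (k - t) + 1 ≤ mixedDist c₁ c₂ := by
  intro c₁ hc₁ c₂ hc₂ hne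
  by_contra! hd
  obtain ⟨x, hx, hx₁, hx₂⟩ :=
    exists_covers_of_mixedDist_le htk (hC c₁ hc₁) (hC c₂ hc₂) (Nat.le_of_lt_succ hd)
  exact hne ((hcov x hx).unique ⟨hc₁, hx₁⟩ ⟨hc₂, hx₂⟩)

end Words

section Labels

variable {r : ℕ}

theorem val_natCast_add_one (i : Fin r) : ((i : ℕ) + 1 : ZMod (r + 1)).val = i + 1 := by
  rw [← Nat.cast_add_one, ZMod.val_natCast_of_lt (by omega)]

theorem natCast_add_one_ne_zero (i : Fin r) : ((i : ℕ) + 1 : ZMod (r + 1)) ≠ 0 := by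
  intro h
  simpa [h] using val_natCast_add_one i

theorem natCast_add_one_injective :
    Function.Injective fun i : Fin r => ((i : ℕ) + 1 : ZMod (r + 1)) := by
  intro i j h
  have := congrArg ZMod.val h
  simp only [val_natCast_add_one] at this
  omega

theorem exists_natCast_add_one_eq {σ : ZMod (r + 1)} (hσ : σ ≠ 0) :
    ∃ i : Fin r, ((i : ℕ) + 1 : ZMod (r + 1)) = σ := by
  have hpos : σ.val ≠ 0 := (ZMod.val_ne_zero σ).2 hσ
  refine ⟨⟨σ.val - 1, by have := ZMod.val_lt σ; omega⟩, ZMod.val_injective _ ?_⟩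
  rw [val_natCast_add_one]
  exact Nat.sub_add_cancel (Nat.one_le_iff_ne_zero.2 hpos)

end Labels

theorem eq_of_subset_of_subset_of_le_card {ι : Type*} {S : Finset (Finset ι)} {m : ℕ}
    (hS : ∀ s : Finset ι, #s = m → ∃! b, b ∈ S ∧ s ⊆ b) {s b₁ b₂ : Finset ι} (hs : m ≤ #s)
    (hb₁ : b₁ ∈ S) (hb₂ : b₂ ∈ S) (hs₁ : s ⊆ b₁) (hs₂ : s ⊆ b₂) : b₁ = b₂ := by
  obtain ⟨s', hs's, hs'⟩ := exists_subset_card_eq hs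
  exact (hS s' hs').unique ⟨hb₁, hs's.trans hs₁⟩ ⟨hb₂, hs's.trans hs₂⟩

section Code

variable {ι : Type*} [Fintype ι] [DecidableEq ι] {r : ℕ}

def mixedCode (R : Finset (Finset ι)) (T : Fin r → Finset (Finset ι)) :
    Set ((ι → ZMod 2) × ZMod (r + 1)) :=
  {w | (∃ b ∈ R, w = (indicatorWord b, 0)) ∨
    ∃ i : Fin r, ∃ b ∈ T i, w = (indicatorWord b, ((i : ℕ) + 1 : ZMod (r + 1)))}

variable {k t : ℕ} {R : Finset (Finset ι)} {T : Fin r → Finset (Finset ι)}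

theorem mixedWeight_of_mem_mixedCode (hk : 1 ≤ k) (hRk : ∀ b ∈ R, #b = k)
    (hTk : ∀ i, ∀ b ∈ T i, #b = k - 1) : ∀ c ∈ mixedCode R T, mixedWeight c = k := by
  rintro c (⟨b, hb, rfl⟩ | ⟨i, b, hb, rfl⟩)
  · simp [mixedWeight, hammingNorm_indicatorWord, hRk b hb]
  · simp only [mixedWeight, hammingNorm_indicatorWord, hTk i b hb,
      if_neg (natCast_add_one_ne_zero i)]
    omega

theorem existsUnique_covers_of_snd_eq_zero
    (hRt : ∀ s : Finset ι, #s = t → ∀ b₁ ∈ R, ∀ b₂ ∈ R, s ⊆ b₁ → s ⊆ b₂ → b₁ = b₂)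
    (hTS : ∀ i, ∀ s : Finset ι, #s = t - 1 → ∃! b, b ∈ T i ∧ s ⊆ b)
    (hcov : ∀ s : Finset ι, #s = t → (¬ ∃ b ∈ R, s ⊆ b) → ∃! i, ∃ b ∈ T i, s ⊆ b)
    (hcov' : ∀ s : Finset ι, #s = t → (∃ b ∈ R, s ⊆ b) → ∀ i, ∀ b ∈ T i, ¬ s ⊆ b)
    {x : (ι → ZMod 2) × ZMod (r + 1)} (hx₁ : #(wordSupport x.1) = t) (hx₂ : x.2 = 0) :
    ∃! c, c ∈ mixedCode R T ∧ Covers c x := by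
  by_cases hR : ∃ b ∈ R, wordSupport x.1 ⊆ b
  · obtain ⟨b₀, hb₀, hxb₀⟩ := hR
    refine ⟨(indicatorWord b₀, 0), ⟨Or.inl ⟨b₀, hb₀, rfl⟩, by simp [hxb₀, hx₂]⟩, ?_⟩
    rintro c ⟨⟨b, hb, rfl⟩ | ⟨i, b, hb, rfl⟩, hxb, -⟩ <;> rw [wordSupport_indicatorWord] at hxb
    · rw [hRt _ hx₁ b hb b₀ hb₀ hxb hxb₀]
    · exact absurd hxb (hcov' _ hx₁ ⟨b₀, hb₀, hxb₀⟩ i b hb)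
  · obtain ⟨i₀, ⟨b₀, hb₀, hxb₀⟩, hi₀⟩ := hcov _ hx₁ hR
    refine ⟨(indicatorWord b₀, ((i₀ : ℕ) + 1 : ZMod (r + 1))),
      ⟨Or.inr ⟨i₀, b₀, hb₀, rfl⟩, by simp [hxb₀, hx₂]⟩, ?_⟩
    rintro c ⟨⟨b, hb, rfl⟩ | ⟨i, b, hb, rfl⟩, hxb, -⟩ <;> rw [wordSupport_indicatorWord] at hxb
    · exact absurd ⟨b, hb, hxb⟩ hR
    · obtain rfl := hi₀ i ⟨b, hb, hxb⟩
      rw [eq_of_subset_of_subset_of_le_card (hTS i) (by omega) hb hb₀ hxb hxb₀]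

theorem existsUnique_covers_of_snd_ne_zero
    (hTS : ∀ i, ∀ s : Finset ι, #s = t - 1 → ∃! b, b ∈ T i ∧ s ⊆ b)
    {x : (ι → ZMod 2) × ZMod (r + 1)} (hx₁ : #(wordSupport x.1) = t - 1) (hx₂ : x.2 ≠ 0) :
    ∃! c, c ∈ mixedCode R T ∧ Covers c x := by
  obtain ⟨i₀, hi₀⟩ := exists_natCast_add_one_eq hx₂
  obtain ⟨b₀, ⟨hb₀, hxb₀⟩, hb₀_unique⟩ := hTS i₀ _ hx₁
  refine ⟨(indicatorWord b₀, ((i₀ : ℕ) + 1 : ZMod (r + 1))),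
    ⟨Or.inr ⟨i₀, b₀, hb₀, rfl⟩, by simp [hxb₀, hi₀]⟩, ?_⟩
  rintro c ⟨⟨b, hb, rfl⟩ | ⟨i, b, hb, rfl⟩, hxb, hσ⟩ <;> rw [wordSupport_indicatorWord] at hxb
  · exact absurd (hσ.elim id id) hx₂
  · obtain rfl : i = i₀ := natCast_add_one_injective ((hσ.resolve_left hx₂).symm.trans hi₀.symm)
    rw [hb₀_unique b ⟨hb, hxb⟩]

theorem existsUnique_covers
    (hRt : ∀ s : Finset ι, #s = t → ∀ b₁ ∈ R, ∀ b₂ ∈ R, s ⊆ b₁ → s ⊆ b₂ → b₁ = b₂)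
    (hTS : ∀ i, ∀ s : Finset ι, #s = t - 1 → ∃! b, b ∈ T i ∧ s ⊆ b)
    (hcov : ∀ s : Finset ι, #s = t → (¬ ∃ b ∈ R, s ⊆ b) → ∃! i, ∃ b ∈ T i, s ⊆ b)
    (hcov' : ∀ s : Finset ι, #s = t → (∃ b ∈ R, s ⊆ b) → ∀ i, ∀ b ∈ T i, ¬ s ⊆ b)
    {x : (ι → ZMod 2) × ZMod (r + 1)} (hx : mixedWeight x = t) :
    ∃! c, c ∈ mixedCode R T ∧ Covers c x := by
  rw [mixedWeight, hammingNorm_eq_card_wordSupport] at hx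
  by_cases hx₂ : x.2 = 0
  · rw [if_pos hx₂] at hx
    exact existsUnique_covers_of_snd_eq_zero hRt hTS hcov hcov' hx hx₂
  · rw [if_neg hx₂] at hx
    exact existsUnique_covers_of_snd_ne_zero hTS (by omega) hx₂

end Code

end MixedSteiner

open MixedSteiner in
theorem stmt11_general (n k t r : ℕ) (ht : 1 ≤ t) (htk : t ≤ k)
    (R : Finset (Finset (Fin n))) (hRk : ∀ b ∈ R, b.card = k)
    (hRt : ∀ s : Finset (Fin n), s.card = t →
      ∀ b₁ ∈ R, ∀ b₂ ∈ R, s ⊆ b₁ → s ⊆ b₂ → b₁ = b₂)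
    (T : Fin r → Finset (Finset (Fin n)))
    (hTk : ∀ i, ∀ b ∈ T i, b.card = k - 1)
    (hTS : ∀ i, ∀ s : Finset (Fin n), s.card = t - 1 → ∃! b, b ∈ T i ∧ s ⊆ b)
    (hcov : ∀ s : Finset (Fin n), s.card = t → (¬ ∃ b ∈ R, s ⊆ b) →
      ∃! i, ∃ b ∈ T i, s ⊆ b)
    (hcov' : ∀ s : Finset (Fin n), s.card = t → (∃ b ∈ R, s ⊆ b) →
      ∀ i, ∀ b ∈ T i, ¬ s ⊆ b) :
    ∀ C : Set ((Fin n → ZMod 2) × ZMod (r + 1)),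
      C = { w | (∃ b ∈ R, w = (fun p => if p ∈ b then 1 else 0, 0)) ∨
            (∃ i : Fin r, ∃ b ∈ T i,
              w = (fun p => if p ∈ b then 1 else 0, ((i : ℕ) + 1 : ZMod (r + 1)))) } →
      (∀ c ∈ C, hammingNorm c.1 + (if c.2 = 0 then 0 else 1) = k) ∧
      (∀ x : (Fin n → ZMod 2) × ZMod (r + 1),
        hammingNorm x.1 + (if x.2 = 0 then 0 else 1) = t →
        ∃! c, c ∈ C ∧ hammingDist x.1 c.1 + (if x.2 = c.2 then 0 else 1) = k - t) ∧
      (∀ c₁ ∈ C, ∀ c₂ ∈ C, c₁ ≠ c₂ →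
        2 * (k - t) + 1 ≤ hammingDist c₁.1 c₂.1 + (if c₁.2 = c₂.2 then 0 else 1)) := by
  rintro C rfl
  have hwt := mixedWeight_of_mem_mixedCode (ht.trans htk) hRk hTk
  have hcover : ∀ x, mixedWeight x = t → ∃! c, c ∈ mixedCode R T ∧ Covers c x :=
    fun x => existsUnique_covers hRt hTS hcov hcov'
  refine ⟨hwt, fun x hx => ?_, le_mixedDist_of_existsUnique_covers htk hwt hcover⟩
  exact (existsUnique_congr fun c => and_congr_right fun hc =>
    covers_iff_mixedDist_eq_sub htk (hwt c hc) hx).1 (hcover x hx)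

/-- Let `R` be a set of `k`-subsets of `Z_n` in which every `t`-subset lies in at most one
member, and let `T₁, …, T_r` be pairwise disjoint Steiner systems `S(t-1, k-1, n)` such
that every `t`-subset of `Z_n` is contained either in a member of `R`, or else in (a block
of) exactly one `Tᵢ` (but not both). Then the code over `Z₂ⁿ × Z_{r+1}` whose codewords are
the indicators of the blocks of `R` (with symbol 0 in the last coordinate) together with,
for each block `b` of `Tᵢ`, the indicator of `b` with nonzero symbol `i` in the last
coordinate, is a mixed Steiner system `MS(t, k, Z₂ⁿ × Z_{r+1})`: all codewords have weight
`k`, every weight-`t` word is covered by exactly one codeword, and the minimum Hamming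
distance is at least `2(k-t)+1`. -/
theorem stmt11 (n k t r : ℕ) (ht : 1 ≤ t) (htk : t ≤ k)
    (R : Finset (Finset (Fin n))) (hRk : ∀ b ∈ R, b.card = k)
    (hRt : ∀ s : Finset (Fin n), s.card = t →
      ∀ b₁ ∈ R, ∀ b₂ ∈ R, s ⊆ b₁ → s ⊆ b₂ → b₁ = b₂)
    (T : Fin r → Finset (Finset (Fin n)))
    (hTk : ∀ i, ∀ b ∈ T i, b.card = k - 1)
    (hTS : ∀ i, ∀ s : Finset (Fin n), s.card = t - 1 → ∃! b, b ∈ T i ∧ s ⊆ b)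
    (hTdisj : ∀ i j, i ≠ j → ∀ b, b ∈ T i → b ∉ T j)
    (hcov : ∀ s : Finset (Fin n), s.card = t → (¬ ∃ b ∈ R, s ⊆ b) →
      ∃! i, ∃ b ∈ T i, s ⊆ b)
    (hcov' : ∀ s : Finset (Fin n), s.card = t → (∃ b ∈ R, s ⊆ b) →
      ∀ i, ∀ b ∈ T i, ¬ s ⊆ b) :
    ∀ C : Set ((Fin n → ZMod 2) × ZMod (r + 1)),
      C = { w | (∃ b ∈ R, w = (fun p => if p ∈ b then 1 else 0, 0)) ∨
            (∃ i : Fin r, ∃ b ∈ T i,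
              w = (fun p => if p ∈ b then 1 else 0, ((i : ℕ) + 1 : ZMod (r + 1)))) } →
      (∀ c ∈ C, hammingNorm c.1 + (if c.2 = 0 then 0 else 1) = k) ∧
      (∀ x : (Fin n → ZMod 2) × ZMod (r + 1),
        hammingNorm x.1 + (if x.2 = 0 then 0 else 1) = t →
        ∃! c, c ∈ C ∧ hammingDist x.1 c.1 + (if x.2 = c.2 then 0 else 1) = k - t) ∧
      (∀ c₁ ∈ C, ∀ c₂ ∈ C, c₁ ≠ c₂ →
        2 * (k - t) + 1 ≤ hammingDist c₁.1 c₂.1 + (if c₁.2 = c₂.2 then 0 else 1)) :=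
  stmt11_general n k t r ht htk R hRk hRt T hTk hTS hcov hcov'
end

section
/- Let Q = Z_{q_1} × ⋯ × Z_{q_n} with q_1 ≤ ⋯ ≤ q_n and not all q_i equal. Then there exists a mixed Steiner system MS(1, k, Q) if and only if Σ_{i=1}^{n−1}(q_i − 1) − (q_n − 1)(k − 1) is nonnegative and divisible by k. -/
/-!
Reading a word of weight `k` as the block of its nonzero entries, an `MS(1, k, Q)` is exactly a
partition of the points `(i, α)`, `α ≠ 0`, into blocks of size `k` meeting each coordinate at most
once. Double counting gives `k * |C| = Σ (qᵢ - 1)`, and the `q_n - 1` points of the last coordinate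
lie in distinct blocks, so `|C| ≥ q_n - 1`; this is the arithmetic condition. Conversely, if
`Σ (qᵢ - 1) = k * m` with `m ≥ q_n - 1 ≥ qᵢ - 1`, list the points coordinate by coordinate and give
the `t`-th point the colour `t mod m`: every colour class has `k` points, and since a coordinate
occupies at most `m` consecutive positions, no class meets it twice.
-/

open Finset Function

section Hamming

variable {ι : Type*} [Fintype ι] [DecidableEq ι] {β : ι → Type*} [∀ i, Zero (β i)]
  [∀ i, DecidableEq (β i)]

theorem hammingNorm_single {i : ι} {α : β i} (hα : α ≠ 0) : hammingNorm (Pi.single i α) = 1 := by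
  rw [hammingNorm, card_eq_one]
  refine ⟨i, eq_singleton_iff_unique_mem.2 ⟨by simpa using hα, fun j hj => ?_⟩⟩
  by_contra hji
  simp [Pi.single_eq_of_ne hji] at hj

theorem exists_eq_single_of_hammingNorm_eq_one {x : ∀ i, β i} (hx : hammingNorm x = 1) :
    ∃ i, x i ≠ 0 ∧ x = Pi.single i (x i) := by
  obtain ⟨i, hi⟩ := card_eq_one.1 hx
  have hsupp : ∀ j, x j ≠ 0 ↔ j = i := fun j => by simpa using congrArg (j ∈ ·) hi
  refine ⟨i, (hsupp i).2 rfl, funext fun j => ?_⟩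
  by_cases hji : j = i
  · subst hji; simp
  · rw [Pi.single_eq_of_ne hji]; exact not_not.1 (mt (hsupp j).1 hji)

theorem hammingDist_single_add_eq (i : ι) (α : β i) (c : ∀ i, β i) :
    hammingDist (Pi.single i α) c + (if c i = 0 then 0 else 1) =
      hammingNorm c + (if α = c i then 0 else 1) := by
  have hrest : ∑ j ∈ univ.erase i, (if (Pi.single i α : ∀ i, β i) j ≠ c j then 1 else 0) =
      ∑ j ∈ univ.erase i, (if c j ≠ 0 then 1 else 0) := by
    refine sum_congr rfl fun j hj => ?_
    simp only [Pi.single_eq_of_ne (ne_of_mem_erase hj), ne_comm]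
  rw [hammingDist, hammingNorm, card_filter, card_filter, ← add_sum_erase _ _ (mem_univ i),
    ← add_sum_erase _ _ (mem_univ i), hrest, Pi.single_eq_same]
  split_ifs <;> simp_all <;> omega

theorem hammingDist_single_add_one_eq_iff {i : ι} {α : β i} (hα : α ≠ 0) (c : ∀ i, β i) :
    hammingDist (Pi.single i α) c + 1 = hammingNorm c ↔ c i = α := by
  have h := hammingDist_single_add_eq i α c
  by_cases hci : c i = α
  · subst hci; simp_all
  · rw [if_neg (Ne.symm hci)] at h
    simp only [hci, iff_false]
    split_ifs at h <;> omega

end Hamming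

section PointPartition

variable {ι : Type*} {β : ι → Type*} [∀ i, Zero (β i)] [∀ i, DecidableEq (β i)]

def IsPointPartition (C : Finset (∀ i, β i)) : Prop :=
  ∀ i (α : β i), α ≠ 0 → ∃! c, c ∈ C ∧ c i = α

section Counting

variable [∀ i, Fintype (β i)] {C : Finset (∀ i, β i)}

theorem IsPointPartition.card_filter_apply_ne_zero (hC : IsPointPartition C) (i : ι) :
    #{c ∈ C | c i ≠ 0} = Fintype.card (β i) - 1 := by
  rw [← card_univ, ← card_erase_of_mem (mem_univ 0), ← filter_ne']
  refine card_bij (fun c _ => c i) (fun c hc => by simpa using (mem_filter.1 hc).2)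
    (fun c hc c' hc' hcc' => ?_) (fun α hα => ?_)
  · obtain ⟨hc, hci⟩ := mem_filter.1 hc
    exact (hC i _ hci).unique ⟨hc, rfl⟩ ⟨(mem_filter.1 hc').1, hcc'.symm⟩
  · have hα : α ≠ 0 := (mem_filter.1 hα).2
    obtain ⟨c, ⟨hc, hci⟩, -⟩ := hC i α hα
    exact ⟨c, mem_filter.2 ⟨hc, hci ▸ hα⟩, hci⟩

theorem IsPointPartition.card_sub_one_le_card (hC : IsPointPartition C) (i : ι) :
    Fintype.card (β i) - 1 ≤ #C :=
  hC.card_filter_apply_ne_zero i ▸ card_filter_le _ _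

end Counting

variable [Fintype ι]

theorem existsUnique_hammingDist_iff_isPointPartition [DecidableEq ι] {k : ℕ} (hk : 1 ≤ k)
    {C : Finset (∀ i, β i)} (hC : ∀ c ∈ C, hammingNorm c = k) :
    (∀ x : ∀ i, β i, hammingNorm x = 1 → ∃! c, c ∈ C ∧ hammingDist x c = k - 1) ↔
      IsPointPartition C := by
  have key : ∀ i (α : β i), α ≠ 0 → ∀ c,
      (c ∈ C ∧ hammingDist (Pi.single i α) c = k - 1) ↔ (c ∈ C ∧ c i = α) := by
    intro i α hα c
    refine and_congr_right fun hc => ?_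
    rw [← hammingDist_single_add_one_eq_iff hα, hC c hc]
    omega
  constructor
  · intro h i α hα
    simpa only [key i α hα] using h _ (hammingNorm_single hα)
  · intro h x hx
    obtain ⟨i, hi, hx⟩ := exists_eq_single_of_hammingNorm_eq_one hx
    rw [hx]
    simpa only [key i _ hi] using h i _ hi

theorem sum_hammingNorm_eq_sum_card_filter (C : Finset (∀ i, β i)) :
    ∑ c ∈ C, hammingNorm c = ∑ i, #{c ∈ C | c i ≠ 0} := by
  simp only [hammingNorm, card_filter]
  exact sum_comm

theorem IsPointPartition.sum_card_sub_one_eq_mul [∀ i, Fintype (β i)] {C : Finset (∀ i, β i)}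
    (hC : IsPointPartition C) {k : ℕ} (hk : ∀ c ∈ C, hammingNorm c = k) :
    ∑ i, (Fintype.card (β i) - 1) = k * #C := by
  simp_rw [← hC.card_filter_apply_ne_zero, ← sum_hammingNorm_eq_sum_card_filter,
    sum_congr rfl hk, sum_const, smul_eq_mul, mul_comm]

end PointPartition

section Coloring

variable {ι : Type*} {β : ι → Type*} [∀ i, Zero (β i)] {κ : Type*}
  (f : (Σ i, {α : β i // α ≠ 0}) → κ)

open Classical in
/-- The word whose nonzero entries are the points of colour `b`; when a coordinate carries
several points of colour `b`, an arbitrary one of them is chosen. -/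
noncomputable def colorClassWord (b : κ) : ∀ i, β i := fun i =>
  if h : ∃ α, f ⟨i, α⟩ = b then (h.choose : β i) else 0

theorem colorClassWord_ne_zero_iff (b : κ) (i : ι) :
    colorClassWord f b i ≠ 0 ↔ ∃ α, f ⟨i, α⟩ = b := by
  unfold colorClassWord
  split_ifs with h
  · exact iff_of_true h.choose.2 h
  · exact iff_of_false (not_not.2 rfl) h

variable {f}

theorem colorClassWord_eq_iff (hf : ∀ i, Injective fun α => f ⟨i, α⟩) {b : κ} {i : ι}
    (α : {α : β i // α ≠ 0}) : colorClassWord f b i = α ↔ f ⟨i, α⟩ = b := by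
  unfold colorClassWord
  split_ifs with h
  · rw [← Subtype.ext_iff]
    exact ⟨fun he => he ▸ h.choose_spec, fun hα => hf i (h.choose_spec.trans hα.symm)⟩
  · exact iff_of_false (fun h0 => α.2 h0.symm) fun hα => h ⟨α, hα⟩

theorem hammingNorm_colorClassWord [Fintype ι] [∀ i, Fintype (β i)] [∀ i, DecidableEq (β i)]
    [DecidableEq κ] (hf : ∀ i, Injective fun α => f ⟨i, α⟩) (b : κ) :
    hammingNorm (colorClassWord f b) = #{p | f p = b} := by
  symm
  refine card_bij (fun p _ => p.1) (fun p hp => ?_) (fun p hp p' hp' hpp' => ?_) (fun i hi => ?_)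
  · exact mem_filter.2 ⟨mem_univ _, (colorClassWord_ne_zero_iff f b _).2 ⟨p.2, (mem_filter.1 hp).2⟩⟩
  · obtain ⟨i, α⟩ := p
    obtain ⟨i', α'⟩ := p'
    obtain rfl : i = i' := hpp'
    rw [hf i (((mem_filter.1 hp).2).trans ((mem_filter.1 hp').2).symm)]
  · obtain ⟨α, hα⟩ := (colorClassWord_ne_zero_iff f b i).1 (mem_filter.1 hi).2
    exact ⟨⟨i, α⟩, mem_filter.2 ⟨mem_univ _, hα⟩, rfl⟩

theorem isPointPartition_image_colorClassWord [Fintype ι] [∀ i, DecidableEq (β i)] [Fintype κ]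
    (hf : ∀ i, Injective fun α => f ⟨i, α⟩) : IsPointPartition (univ.image (colorClassWord f)) := by
  intro i α hα
  refine ⟨colorClassWord f (f ⟨i, ⟨α, hα⟩⟩),
    ⟨mem_image_of_mem _ (mem_univ _), (colorClassWord_eq_iff hf ⟨α, hα⟩).2 rfl⟩, ?_⟩
  rintro c ⟨hc, hci⟩
  obtain ⟨b, -, rfl⟩ := mem_image.1 hc
  rw [(colorClassWord_eq_iff hf ⟨α, hα⟩).1 hci]

end Coloring

theorem card_filter_snd_eq {α β : Type*} [Fintype α] [Fintype β] [DecidableEq β] (b : β) :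
    #{x : α × β | x.2 = b} = Fintype.card α := by
  rw [card_filter, Fintype.sum_prod_type]; simp

theorem exists_coloring_of_sum_eq {N k m : ℕ} (w : Fin N → ℕ) (hsum : ∑ i, w i = k * m)
    (hle : ∀ i, w i ≤ m) :
    ∃ f : (Σ i, Fin (w i)) → Fin m, (∀ i, Injective fun j => f ⟨i, j⟩) ∧
      ∀ b, #{p | f p = b} = k := by
  let e := finSigmaFinEquiv.trans ((finCongr hsum).trans finProdFinEquiv.symm)
  refine ⟨fun p => (e p).2, fun i j j' h => ?_, fun b => ?_⟩
  · have hval : ∀ j : Fin (w i),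
        ((e ⟨i, j⟩).2 : ℕ) = (∑ i' : Fin i, w (Fin.castLE i.2.le i') + j) % m := fun j => by
      simp [e, finSigmaFinEquiv_apply]
    have hmod : (j : ℕ) ≡ j' [MOD m] := by
      have h' := congrArg Fin.val h
      dsimp only at h'
      rw [hval, hval] at h'
      exact Nat.ModEq.add_left_cancel' _ h'
    exact Fin.ext (Nat.ModEq.eq_of_lt_of_lt hmod (j.2.trans_le (hle i)) (j'.2.trans_le (hle i)))
  · rw [card_equiv e (t := {x | x.2 = b}) (fun p => by simp), card_filter_snd_eq, Fintype.card_fin]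

theorem exists_isPointPartition_of_sum_eq {N k m : ℕ} {β : Fin N → Type*} [∀ i, Zero (β i)]
    [∀ i, DecidableEq (β i)] [∀ i, Fintype (β i)]
    (hsum : ∑ i, (Fintype.card (β i) - 1) = k * m) (hle : ∀ i, Fintype.card (β i) - 1 ≤ m) :
    ∃ C : Finset (∀ i, β i), (∀ c ∈ C, hammingNorm c = k) ∧ IsPointPartition C := by
  obtain ⟨g, hg_inj, hg_fib⟩ := exists_coloring_of_sum_eq _ hsum hle
  let E i : {α : β i // α ≠ 0} ≃ Fin (Fintype.card (β i) - 1) :=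
    Fintype.equivFinOfCardEq (by simp [Fintype.card_subtype_compl])
  let e := Equiv.sigmaCongrRight E
  have hf : ∀ i, Injective fun α => g (e ⟨i, α⟩) := fun i => (hg_inj i).comp (E i).injective
  refine ⟨univ.image (colorClassWord (g ∘ e)), fun c hc => ?_,
    isPointPartition_image_colorClassWord hf⟩
  obtain ⟨b, -, rfl⟩ := mem_image.1 hc
  rw [hammingNorm_colorClassWord hf, ← hg_fib b]
  exact card_equiv e (by simp)

theorem exists_le_add_eq_mul_iff {a L k : ℕ} (hk : 1 ≤ k) :
    (∃ N, L ≤ N ∧ a + L = k * N) ↔ L * (k - 1) ≤ a ∧ k ∣ a - L * (k - 1) := by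
  obtain ⟨k, rfl⟩ := Nat.exists_eq_add_of_le' hk
  simp only [Nat.add_sub_cancel]
  constructor
  · rintro ⟨N, hLN, h⟩
    obtain ⟨e, rfl⟩ := Nat.exists_eq_add_of_le hLN
    have ha : a = L * k + (k + 1) * e := by linarith
    rw [ha, Nat.add_sub_cancel_left]
    exact ⟨by omega, dvd_mul_right _ _⟩
  · rintro ⟨hle, d, hd⟩
    refine ⟨L + d, by omega, ?_⟩
    have ha : a = L * k + (k + 1) * d := by omega
    rw [ha]
    ring

theorem stmt16_general (n k : ℕ) (hk : 1 ≤ k) (q : Fin (n + 1) → ℕ) (hq : ∀ i, 2 ≤ q i)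
    (hmono : Monotone q) :
    (∃ C : Finset (∀ i, ZMod (q i)),
      (∀ c ∈ C, hammingNorm c = k) ∧
      ∀ x : ∀ i, ZMod (q i), hammingNorm x = 1 →
        ∃! c, c ∈ C ∧ hammingDist x c = k - 1) ↔
    ((q (Fin.last n) - 1) * (k - 1) ≤ ∑ i : Fin n, (q i.castSucc - 1) ∧
      k ∣ (∑ i : Fin n, (q i.castSucc - 1)) - (q (Fin.last n) - 1) * (k - 1)) := by
  have : ∀ i, NeZero (q i) := fun i => ⟨by have := hq i; omega⟩
  have hsum : ∑ i, (Fintype.card (ZMod (q i)) - 1) =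
      ∑ i : Fin n, (q i.castSucc - 1) + (q (Fin.last n) - 1) := by
    simp only [ZMod.card, Fin.sum_univ_castSucc]
  rw [← exists_le_add_eq_mul_iff hk]
  constructor
  · rintro ⟨C, hCk, hC⟩
    rw [existsUnique_hammingDist_iff_isPointPartition hk hCk] at hC
    refine ⟨#C, by simpa using hC.card_sub_one_le_card (Fin.last n), ?_⟩
    rw [← hsum, hC.sum_card_sub_one_eq_mul hCk]
  · rintro ⟨m, hLm, hm⟩
    have hle : ∀ i, Fintype.card (ZMod (q i)) - 1 ≤ m := fun i => by
      simpa using (Nat.sub_le_sub_right (hmono (Fin.le_last i)) 1).trans hLm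
    obtain ⟨C, hCk, hC⟩ := exists_isPointPartition_of_sum_eq (hsum.trans hm) hle
    exact ⟨C, hCk, (existsUnique_hammingDist_iff_isPointPartition hk hCk).2 hC⟩

/-- Let `Q = Z_{q₁} × ⋯ × Z_{q_{n+1}}` with `q₁ ≤ ⋯ ≤ q_{n+1}`, not all equal. There
exists a mixed Steiner system `MS(1, k, Q)` (a set of weight-`k` words over `Q` such that
every weight-1 word is within Hamming distance `k - 1` of exactly one codeword) if and
only if `Σ_{i<n} (qᵢ - 1) - (q_{n+1} - 1)(k - 1)` is nonnegative and divisible by `k`. -/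
theorem stmt16 (n k : ℕ) (hk : 1 ≤ k) (q : Fin (n + 1) → ℕ) (hq : ∀ i, 2 ≤ q i)
    (hmono : Monotone q) (hne : ∃ i j, q i ≠ q j) :
    (∃ C : Finset (∀ i, ZMod (q i)),
      (∀ c ∈ C, hammingNorm c = k) ∧
      ∀ x : ∀ i, ZMod (q i), hammingNorm x = 1 →
        ∃! c, c ∈ C ∧ hammingDist x c = k - 1) ↔
    ((q (Fin.last n) - 1) * (k - 1) ≤ ∑ i : Fin n, (q i.castSucc - 1) ∧
      k ∣ (∑ i : Fin n, (q i.castSucc - 1)) - (q (Fin.last n) - 1) * (k - 1)) :=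
  stmt16_general n k hk q hq hmono
end
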